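/- arXiv:1912.03252 — 13 statements merged into one kernel-verified Lean document; each statement's English description precedes it below -/
import Mathlib

section
/- Let M be a set and let r be a function from the finite subsets of M to the nonnegative real numbers satisfying (R1) r(∅) = 0, monotonicity r(x) ≤ r(x ∪ y) for all finite x, y ⊆ M, and submodularity (SUBM) r(x ∪ y ∪ z) + r(z) ≤ r(x ∪ z) + r(y ∪ z) for all finite x, y, z ⊆ M. Then r is a diversity rank function on M, i.e., it additionally satisfies (right R2) r(x ∪ y) ≤ r(x) + r(y), (R3) if r(x ∪ y) = r(x) then r(x ∪ y ∪ z) = r(x ∪ z), and (R4) if r(x ∪ y ∪ z) = r(x) + r(y ∪ z) then r(x ∪ y) = r(x) + r(y), for all finite x, y, z ⊆ M. -/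
namespace SubmodularRank

variable {α β : Type*} [SemilatticeSup α] {f : α → β}

theorem map_sup_le_add [OrderBot α] [AddZeroClass β] [LE β]
    (hsubm : ∀ x y z, f (x ⊔ y ⊔ z) + f z ≤ f (x ⊔ z) + f (y ⊔ z)) (hbot : f ⊥ = 0)
    (x y : α) : f (x ⊔ y) ≤ f x + f y := by
  simpa only [sup_bot_eq, hbot, add_zero] using hsubm x y ⊥

variable [AddCommMonoid β] [PartialOrder β] [IsOrderedCancelAddMonoid β]

theorem map_sup_sup_eq_of_map_sup_eq
    (hsubm : ∀ x y z, f (x ⊔ y ⊔ z) + f z ≤ f (x ⊔ z) + f (y ⊔ z)) (hmono : Monotone f)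
    {x y : α} (h : f (x ⊔ y) = f x) (z : α) : f (x ⊔ y ⊔ z) = f (x ⊔ z) := by
  have hxyz : f (x ⊔ y ⊔ z) + f x ≤ f x + f (x ⊔ z) := by
    simpa only [sup_comm y x, sup_right_comm y z x, sup_comm z x, h] using hsubm y z x
  refine le_antisymm ?_ (hmono (sup_le_sup_right le_sup_left z))
  exact le_of_add_le_add_left (by rwa [add_comm] at hxyz)

theorem map_sup_eq_add_of_map_sup_sup_eq_add [OrderBot α]
    (hsubm : ∀ x y z, f (x ⊔ y ⊔ z) + f z ≤ f (x ⊔ z) + f (y ⊔ z)) (hbot : f ⊥ = 0)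
    {x y z : α} (h : f (x ⊔ y ⊔ z) = f x + f (y ⊔ z)) : f (x ⊔ y) = f x + f y := by
  have hxy : f x + f (y ⊔ z) + f y ≤ f (x ⊔ y) + f (y ⊔ z) := by
    simpa only [sup_right_comm x z y, sup_comm z y, h] using hsubm x z y
  refine le_antisymm (map_sup_le_add hsubm hbot x y) (le_of_add_le_add_right (a := f (y ⊔ z)) ?_)
  rwa [add_right_comm] at hxy

end SubmodularRank

open SubmodularRank in
theorem subm_implies_diversity_rank_general {α : Type*} [DecidableEq α] (rk : Finset α → ℝ)
    (hR1 : rk ∅ = 0)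
    (hmono : ∀ x y : Finset α, rk x ≤ rk (x ∪ y))
    (hsubm : ∀ x y z : Finset α, rk (x ∪ y ∪ z) + rk z ≤ rk (x ∪ z) + rk (y ∪ z)) :
    (∀ x y : Finset α, rk (x ∪ y) ≤ rk x + rk y) ∧
    (∀ x y z : Finset α, rk (x ∪ y) = rk x → rk (x ∪ y ∪ z) = rk (x ∪ z)) ∧
    (∀ x y z : Finset α, rk (x ∪ y ∪ z) = rk x + rk (y ∪ z) →
      rk (x ∪ y) = rk x + rk y) := by
  have hrk : Monotone rk := fun x y hxy => Finset.union_eq_right.mpr hxy ▸ hmono x y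
  exact ⟨map_sup_le_add hsubm hR1, fun _ _ z h => map_sup_sup_eq_of_map_sup_eq hsubm hrk h z,
    fun _ _ _ h => map_sup_eq_add_of_map_sup_sup_eq_add hsubm hR1 h⟩

theorem subm_implies_diversity_rank {α : Type*} [DecidableEq α] (rk : Finset α → ℝ)
    (hnn : ∀ x : Finset α, 0 ≤ rk x)
    (hR1 : rk ∅ = 0)
    (hmono : ∀ x y : Finset α, rk x ≤ rk (x ∪ y))
    (hsubm : ∀ x y z : Finset α, rk (x ∪ y ∪ z) + rk z ≤ rk (x ∪ z) + rk (y ∪ z)) :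
    (∀ x y : Finset α, rk (x ∪ y) ≤ rk x + rk y) ∧
    (∀ x y z : Finset α, rk (x ∪ y) = rk x → rk (x ∪ y ∪ z) = rk (x ∪ z)) ∧
    (∀ x y z : Finset α, rk (x ∪ y ∪ z) = rk x + rk (y ∪ z) →
      rk (x ∪ y) = rk x + rk y) :=
  subm_implies_diversity_rank_general rk hR1 hmono hsubm
end

section
/- Let E be a finite set and let r be a function from subsets of E to nonnegative integers satisfying the matroid rank axioms (M1), (M2), (M3). Then r (viewed as a real-valued function on the finite subsets of E) is a diversity rank function on E, i.e., it satisfies (R1) r(∅) = 0, (R2) r(x) ≤ r(x ∪ y) ≤ r(x) + r(y), (R3) if r(x ∪ y) = r(x) then r(x ∪ y ∪ z) = r(x ∪ z), and (R4) if r(x ∪ y ∪ z) = r(x) + r(y ∪ z) then r(x ∪ y) = r(x) + r(y), for all x, y, z ⊆ E. -/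
/-!
Monotonicity follows from (M3) by adding one element at a time. Given monotonicity, (R3) and
(R4) are single instances of submodularity: for (R3) apply it to `x ∪ z` and `x ∪ y`, whose meet
contains `x`; for (R4) apply it to `x ∪ y` and `y ∪ z`, whose meet contains `y`.
-/

def IsSubmodular {α β : Type*} [Lattice α] [Add β] [LE β] (f : α → β) : Prop :=
  ∀ x y, f (x ⊔ y) + f (x ⊓ y) ≤ f x + f y

namespace IsSubmodular

variable {α β : Type*} [Lattice α] [AddCommMonoid β] [PartialOrder β] {f : α → β}

theorem sup_le_add [CanonicallyOrderedAdd β] (hf : IsSubmodular f) (x y : α) :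
    f (x ⊔ y) ≤ f x + f y :=
  le_self_add.trans (hf x y)

theorem sup_sup_eq_of_sup_eq [IsOrderedCancelAddMonoid β] (hf : IsSubmodular f)
    (hmono : Monotone f) {x y : α} (z : α) (h : f (x ⊔ y) = f x) :
    f (x ⊔ y ⊔ z) = f (x ⊔ z) := by
  have hsub := hf (x ⊔ z) (x ⊔ y)
  rw [show x ⊔ z ⊔ (x ⊔ y) = x ⊔ y ⊔ z by ac_rfl, h] at hsub
  have hx : f x ≤ f ((x ⊔ z) ⊓ (x ⊔ y)) := hmono (le_inf le_sup_left le_sup_left)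
  refine le_antisymm (le_of_add_le_add_right (hsub.trans (by gcongr))) ?_
  exact hmono (sup_le (le_sup_left.trans le_sup_left) le_sup_right)

theorem sup_eq_add_of_sup_sup_eq_add [IsOrderedCancelAddMonoid β] [CanonicallyOrderedAdd β]
    (hf : IsSubmodular f) (hmono : Monotone f) {x y z : α}
    (h : f (x ⊔ y ⊔ z) = f x + f (y ⊔ z)) :
    f (x ⊔ y) = f x + f y := by
  have hsub := hf (x ⊔ y) (y ⊔ z)
  rw [show x ⊔ y ⊔ (y ⊔ z) = x ⊔ y ⊔ z by rw [sup_assoc, sup_left_idem, sup_assoc], h]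
    at hsub
  have hy : f y ≤ f ((x ⊔ y) ⊓ (y ⊔ z)) := hmono (le_inf le_sup_right le_sup_left)
  refine le_antisymm (hf.sup_le_add x y) (le_of_add_le_add_right (a := f (y ⊔ z)) ?_)
  calc f x + f y + f (y ⊔ z) = f x + f (y ⊔ z) + f y := add_right_comm _ _ _
    _ ≤ f x + f (y ⊔ z) + f ((x ⊔ y) ⊓ (y ⊔ z)) := by gcongr
    _ ≤ f (x ⊔ y) + f (y ⊔ z) := hsub

end IsSubmodular

theorem Finset.monotone_of_le_union_singleton {α β : Type*} [DecidableEq α] [Preorder β]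
    {f : Finset α → β} (h : ∀ s a, f s ≤ f (s ∪ {a})) : Monotone f :=
  monotone_iff_forall_le_cons.2 fun s a _ => by
    simpa [cons_eq_insert, union_comm] using h s a

theorem matroid_rank_is_diversity_rank_general {α : Type*} [DecidableEq α]
    (r : Finset α → ℕ)
    (hM1 : ∀ x : Finset α, r x ≤ x.card)
    (hM2 : ∀ x y : Finset α, r (x ∪ y) + r (x ∩ y) ≤ r x + r y)
    (hM3 : ∀ x y : Finset α, y.card = 1 → r x ≤ r (x ∪ y) ∧ r (x ∪ y) ≤ r x + 1) :
    ((r ∅ : ℝ) = 0) ∧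
    (∀ x y : Finset α, (r x : ℝ) ≤ (r (x ∪ y) : ℝ) ∧ (r (x ∪ y) : ℝ) ≤ (r x : ℝ) + (r y : ℝ)) ∧
    (∀ x y z : Finset α, (r (x ∪ y) : ℝ) = (r x : ℝ) → (r (x ∪ y ∪ z) : ℝ) = (r (x ∪ z) : ℝ)) ∧
    (∀ x y z : Finset α, (r (x ∪ y ∪ z) : ℝ) = (r x : ℝ) + (r (y ∪ z) : ℝ) →
      (r (x ∪ y) : ℝ) = (r x : ℝ) + (r y : ℝ)) := by
  have hsub : IsSubmodular r := hM2
  have hmono : Monotone r :=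
    Finset.monotone_of_le_union_singleton fun s a => (hM3 s {a} (Finset.card_singleton a)).1
  refine ⟨by simpa using hM1 ∅, fun x y => ⟨?_, ?_⟩, fun x y z h => ?_, fun x y z h => ?_⟩
  · exact_mod_cast hmono Finset.subset_union_left
  · exact_mod_cast hsub.sup_le_add x y
  · exact_mod_cast hsub.sup_sup_eq_of_sup_eq hmono z (by exact_mod_cast h)
  · exact_mod_cast hsub.sup_eq_add_of_sup_sup_eq_add hmono (by exact_mod_cast h)

theorem matroid_rank_is_diversity_rank {α : Type*} [Fintype α] [DecidableEq α]
    (r : Finset α → ℕ)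
    (hM1 : ∀ x : Finset α, r x ≤ x.card)
    (hM2 : ∀ x y : Finset α, r (x ∪ y) + r (x ∩ y) ≤ r x + r y)
    (hM3 : ∀ x y : Finset α, y.card = 1 → r x ≤ r (x ∪ y) ∧ r (x ∪ y) ≤ r x + 1) :
    ((r ∅ : ℝ) = 0) ∧
    (∀ x y : Finset α, (r x : ℝ) ≤ (r (x ∪ y) : ℝ) ∧ (r (x ∪ y) : ℝ) ≤ (r x : ℝ) + (r y : ℝ)) ∧
    (∀ x y z : Finset α, (r (x ∪ y) : ℝ) = (r x : ℝ) → (r (x ∪ y ∪ z) : ℝ) = (r (x ∪ z) : ℝ)) ∧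
    (∀ x y z : Finset α, (r (x ∪ y ∪ z) : ℝ) = (r x : ℝ) + (r (y ∪ z) : ℝ) →
      (r (x ∪ y) : ℝ) = (r x : ℝ) + (r y : ℝ)) :=
  matroid_rank_is_diversity_rank_general r hM1 hM2 hM3
end

section
/- Let M and A be sets and let X be a nonempty finite set of functions from M to A. Then the relational diversity rank function rk_X induced by X, defined by rk_X(x) = log₂ |{s↾x : s ∈ X}| for finite x ⊆ M, is a diversity rank function on M: it satisfies (R1) rk_X(∅) = 0, (R2) rk_X(x) ≤ rk_X(x ∪ y) ≤ rk_X(x) + rk_X(y), (R3) if rk_X(x ∪ y) = rk_X(x) then rk_X(x ∪ y ∪ z) = rk_X(x ∪ z), and (R4) if rk_X(x ∪ y ∪ z) = rk_X(x) + rk_X(y ∪ z) then rk_X(x ∪ y) = rk_X(x) + rk_X(y), for all finite x, y, z ⊆ M. -/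
/-!
Write `f_x` for the restriction map `s ↦ s↾x` on `X`, so that `2 ^ rk_X(x) = |f_x(X)|`.
Restriction to `x ∪ y` has the same fibres on `X` as the pair `(f_x, f_y)`, so each axiom
becomes a statement about the image sizes of pairs of maps on a finite set:
`|f(X)| ≤ |(f, g)(X)| ≤ |f(X)| |g(X)|` (R2); equality on the left means that `f` determines `g`
on `X`, which survives pairing both sides with a third map `h` (R3); equality on the right means
`(f, g)(X) = f(X) × g(X)`, and projecting `(f, (g, h))(X) = f(X) × (g, h)(X)` onto the first two
coordinates gives this for `(f, g)` (R4).
-/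

/-- The relational diversity rank induced by a team `X` of assignments `α → β`:
`rk_X(x) = log₂ |{s↾x : s ∈ X}|`. -/
noncomputable def relRank {α : Type*} {β : Type*} (X : Finset (α → β)) (x : Finset α) : ℝ :=
  Real.logb 2 (Set.ncard ((↑x : Set α).restrict '' (↑X : Set (α → β))))

namespace Set

variable {ι α β γ : Type*} {s : Set ι} {f : ι → α} {g : ι → β}

theorem image_fst_image_prod : Prod.fst '' (Function.prod f g '' s) = f '' s := by
  rw [image_image]; rfl

theorem image_snd_image_prod : Prod.snd '' (Function.prod f g '' s) = g '' s := by
  rw [image_image]; rfl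

theorem ncard_image_le_ncard_image_prod (hs : s.Finite) :
    (f '' s).ncard ≤ (Function.prod f g '' s).ncard := by
  rw [← image_fst_image_prod (f := f) (g := g)]
  exact ncard_image_le (hs.image _)

theorem ncard_image_prod_le_mul (hs : s.Finite) :
    (Function.prod f g '' s).ncard ≤ (f '' s).ncard * (g '' s).ncard := by
  rw [← ncard_prod]
  exact ncard_le_ncard image_prodMk_subset_prod ((hs.image f).prod (hs.image g))

theorem ncard_image_prod_eq_left (hfg : ∀ i ∈ s, ∀ j ∈ s, f i = f j → g i = g j) :
    (Function.prod f g '' s).ncard = (f '' s).ncard := by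
  rw [← image_fst_image_prod (f := f) (g := g)]
  refine (InjOn.ncard_image ?_).symm
  rintro _ ⟨i, hi, rfl⟩ _ ⟨j, hj, rfl⟩ hij
  exact Prod.ext hij (hfg i hi j hj hij)

theorem ncard_image_eq_of_forall_eq_iff (hfg : ∀ i ∈ s, ∀ j ∈ s, f i = f j ↔ g i = g j) :
    (f '' s).ncard = (g '' s).ncard := by
  rw [← ncard_image_prod_eq_left fun i hi j hj => (hfg i hi j hj).1,
    ← image_snd_image_prod (f := f) (g := g)]
  refine (InjOn.ncard_image ?_).symm
  rintro _ ⟨i, hi, rfl⟩ _ ⟨j, hj, rfl⟩ hij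
  exact Prod.ext ((hfg i hi j hj).2 hij) hij

theorem ncard_image_prod_eq_left_iff (hs : s.Finite) :
    (Function.prod f g '' s).ncard = (f '' s).ncard ↔
      ∀ i ∈ s, ∀ j ∈ s, f i = f j → g i = g j := by
  refine ⟨fun hfg i hi j hj hij => ?_, ncard_image_prod_eq_left⟩
  rw [← image_fst_image_prod (f := f) (g := g)] at hfg
  exact congrArg Prod.snd <| injOn_of_ncard_image_eq hfg.symm (hs.image _)
    (mem_image_of_mem _ hi) (mem_image_of_mem _ hj) hij

theorem ncard_image_prod_prod_eq {h : ι → γ} (hs : s.Finite)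
    (hfg : (Function.prod f g '' s).ncard = (f '' s).ncard) :
    (Function.prod (Function.prod f g) h '' s).ncard = (Function.prod f h '' s).ncard := by
  have hg := (ncard_image_prod_eq_left_iff hs).1 hfg
  refine ncard_image_eq_of_forall_eq_iff fun i hi j hj => ?_
  have := hg i hi j hj
  simp only [Function.prod_apply, Prod.ext_iff]
  tauto

theorem ncard_image_prod_eq_mul_iff (hs : s.Finite) :
    (Function.prod f g '' s).ncard = (f '' s).ncard * (g '' s).ncard ↔
      Function.prod f g '' s = (f '' s) ×ˢ (g '' s) := by
  refine ⟨fun hfg => ?_, fun hfg => by rw [hfg, ncard_prod]⟩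
  exact eq_of_subset_of_ncard_le image_prodMk_subset_prod (by rw [ncard_prod]; exact hfg.ge)
    ((hs.image f).prod (hs.image g))

theorem image_prod_eq_prod_of_image_prod_prod_eq {h : ι → γ}
    (hfgh : Function.prod f (Function.prod g h) '' s = (f '' s) ×ˢ (Function.prod g h '' s)) :
    Function.prod f g '' s = (f '' s) ×ˢ (g '' s) :=
  calc Function.prod f g '' s
      = Prod.map id Prod.fst '' (Function.prod f (Function.prod g h) '' s) := by
        rw [image_image]; rfl
    _ = (f '' s) ×ˢ (g '' s) := by
        rw [hfgh, prodMap_image_prod, image_id, image_fst_image_prod]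

end Set

theorem Real.logb_natCast_le_logb_natCast_iff {b : ℝ} (hb : 1 < b) {m n : ℕ} (hm : 0 < m)
    (hn : 0 < n) : Real.logb b m ≤ Real.logb b n ↔ m ≤ n := by
  rw [Real.logb_le_logb hb (Nat.cast_pos.2 hm) (Nat.cast_pos.2 hn), Nat.cast_le]

theorem Real.logb_natCast_inj {b : ℝ} (hb : 1 < b) {m n : ℕ} (hm : 0 < m) (hn : 0 < n) :
    Real.logb b m = Real.logb b n ↔ m = n :=
  ((Real.logb_injOn_pos hb).eq_iff (Set.mem_Ioi.2 (Nat.cast_pos.2 hm))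
    (Set.mem_Ioi.2 (Nat.cast_pos.2 hn))).trans Nat.cast_inj

section RelRank

open Set

variable {α β : Type*} {X : Finset (α → β)}

noncomputable def numRestrictions (X : Finset (α → β)) (x : Finset α) : ℕ :=
  ((↑x : Set α).domRestrict '' (↑X : Set (α → β))).ncard

theorem numRestrictions_pos (hX : X.Nonempty) (x : Finset α) : 0 < numRestrictions X x :=
  (ncard_pos (X.finite_toSet.image _)).2 ((Finset.coe_nonempty.2 hX).image _)

theorem numRestrictions_empty (hX : X.Nonempty) : numRestrictions X ∅ = 1 := by
  refine le_antisymm ?_ (numRestrictions_pos hX ∅)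
  rw [numRestrictions, Finset.coe_empty]
  exact ncard_le_one_of_subsingleton _

theorem relRank_eq_logb (X : Finset (α → β)) (x : Finset α) :
    relRank X x = Real.logb 2 (numRestrictions X x) :=
  rfl

theorem relRank_add (hX : X.Nonempty) (x y : Finset α) :
    relRank X x + relRank X y = Real.logb 2 ↑(numRestrictions X x * numRestrictions X y) := by
  rw [relRank_eq_logb, relRank_eq_logb, Nat.cast_mul,
    Real.logb_mul (Nat.cast_pos.2 (numRestrictions_pos hX x)).ne'
      (Nat.cast_pos.2 (numRestrictions_pos hX y)).ne']

theorem relRank_le_relRank_iff (hX : X.Nonempty) {x y : Finset α} :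
    relRank X x ≤ relRank X y ↔ numRestrictions X x ≤ numRestrictions X y :=
  Real.logb_natCast_le_logb_natCast_iff one_lt_two (numRestrictions_pos hX x)
    (numRestrictions_pos hX y)

theorem relRank_eq_relRank_iff (hX : X.Nonempty) {x y : Finset α} :
    relRank X x = relRank X y ↔ numRestrictions X x = numRestrictions X y :=
  Real.logb_natCast_inj one_lt_two (numRestrictions_pos hX x) (numRestrictions_pos hX y)

theorem relRank_le_add_iff (hX : X.Nonempty) {w x y : Finset α} :
    relRank X w ≤ relRank X x + relRank X y ↔
      numRestrictions X w ≤ numRestrictions X x * numRestrictions X y := by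
  rw [relRank_add hX]
  exact Real.logb_natCast_le_logb_natCast_iff one_lt_two (numRestrictions_pos hX w)
    (mul_pos (numRestrictions_pos hX x) (numRestrictions_pos hX y))

theorem relRank_eq_add_iff (hX : X.Nonempty) {w x y : Finset α} :
    relRank X w = relRank X x + relRank X y ↔
      numRestrictions X w = numRestrictions X x * numRestrictions X y := by
  rw [relRank_add hX]
  exact Real.logb_natCast_inj one_lt_two (numRestrictions_pos hX w)
    (mul_pos (numRestrictions_pos hX x) (numRestrictions_pos hX y))

variable [DecidableEq α]

theorem numRestrictions_union (x y : Finset α) :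
    numRestrictions X (x ∪ y) = (Function.prod (↑x : Set α).domRestrict
      (↑y : Set α).domRestrict '' (↑X : Set (α → β))).ncard :=
  ncard_image_eq_of_forall_eq_iff fun s _ t _ => by
    simp only [Function.prod_apply, Prod.ext_iff, domRestrict_eq_domRestrict_iff,
      Finset.coe_union, eqOn_union]

theorem numRestrictions_union_union (x y z : Finset α) :
    numRestrictions X (x ∪ y ∪ z) = (Function.prod (Function.prod (↑x : Set α).domRestrict
      (↑y : Set α).domRestrict) (↑z : Set α).domRestrict '' (↑X : Set (α → β))).ncard :=
  ncard_image_eq_of_forall_eq_iff fun s _ t _ => by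
    simp only [Function.prod_apply, Prod.ext_iff, domRestrict_eq_domRestrict_iff,
      Finset.coe_union, eqOn_union]

theorem numRestrictions_union_union' (x y z : Finset α) :
    numRestrictions X (x ∪ y ∪ z) = (Function.prod (↑x : Set α).domRestrict
      (Function.prod (↑y : Set α).domRestrict (↑z : Set α).domRestrict) ''
        (↑X : Set (α → β))).ncard :=
  ncard_image_eq_of_forall_eq_iff fun s _ t _ => by
    simp only [Function.prod_apply, Prod.ext_iff, domRestrict_eq_domRestrict_iff,
      Finset.coe_union, eqOn_union, and_assoc]

theorem numRestrictions_le_union (x y : Finset α) :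
    numRestrictions X x ≤ numRestrictions X (x ∪ y) := by
  rw [numRestrictions_union]
  exact ncard_image_le_ncard_image_prod X.finite_toSet

theorem numRestrictions_union_le_mul (x y : Finset α) :
    numRestrictions X (x ∪ y) ≤ numRestrictions X x * numRestrictions X y := by
  rw [numRestrictions_union]
  exact ncard_image_prod_le_mul X.finite_toSet

theorem numRestrictions_union_union_eq {x y z : Finset α}
    (h : numRestrictions X (x ∪ y) = numRestrictions X x) :
    numRestrictions X (x ∪ y ∪ z) = numRestrictions X (x ∪ z) := by
  rw [numRestrictions_union] at h
  rw [numRestrictions_union_union, numRestrictions_union]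
  exact ncard_image_prod_prod_eq X.finite_toSet h

theorem numRestrictions_union_eq_mul {x y z : Finset α}
    (h : numRestrictions X (x ∪ y ∪ z) = numRestrictions X x * numRestrictions X (y ∪ z)) :
    numRestrictions X (x ∪ y) = numRestrictions X x * numRestrictions X y := by
  rw [numRestrictions_union_union', numRestrictions_union] at h
  rw [numRestrictions_union]
  unfold numRestrictions at h ⊢
  rw [ncard_image_prod_eq_mul_iff X.finite_toSet] at h ⊢
  exact image_prod_eq_prod_of_image_prod_prod_eq h

end RelRank

theorem relRank_is_diversity_rank {α : Type*} {β : Type*} [DecidableEq α]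
    (X : Finset (α → β)) (hX : X.Nonempty) :
    (relRank X ∅ = 0) ∧
    (∀ x y : Finset α,
      relRank X x ≤ relRank X (x ∪ y) ∧ relRank X (x ∪ y) ≤ relRank X x + relRank X y) ∧
    (∀ x y z : Finset α,
      relRank X (x ∪ y) = relRank X x → relRank X (x ∪ y ∪ z) = relRank X (x ∪ z)) ∧
    (∀ x y z : Finset α,
      relRank X (x ∪ y ∪ z) = relRank X x + relRank X (y ∪ z) →
        relRank X (x ∪ y) = relRank X x + relRank X y) := by
  refine ⟨?_, fun x y => ⟨?_, ?_⟩, fun x y z h => ?_, fun x y z h => ?_⟩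
  · rw [relRank_eq_logb, numRestrictions_empty hX, Nat.cast_one, Real.logb_one]
  · exact (relRank_le_relRank_iff hX).2 (numRestrictions_le_union x y)
  · exact (relRank_le_add_iff hX).2 (numRestrictions_union_le_mul x y)
  · exact (relRank_eq_relRank_iff hX).2
      (numRestrictions_union_union_eq ((relRank_eq_relRank_iff hX).1 h))
  · exact (relRank_eq_add_iff hX).2 (numRestrictions_union_eq_mul ((relRank_eq_add_iff hX).1 h))
end

section
/- Relational diversity rank functions can fail submodularity: there exist a three-element set M = {v₁, v₂, v₃} and a nonempty finite set X of functions from M to ℕ such that the relational diversity rank function rk_X induced by X satisfies rk_X({v₁,v₂,v₃}) + rk_X({v₂}) > rk_X({v₁,v₂}) + rk_X({v₂,v₃}). (For instance, the team X consisting of the five assignments (v₁,v₂,v₃) ↦ (1,1,1), (1,1,2), (2,1,1), (1,2,1), (2,1,2) has 5·2 = 10 > 9 = 3·3 for the corresponding counts of distinct restrictions.) -/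
namespace relRank

variable {α β : Type*} [DecidableEq β]

def restrictionCount (X : Finset (α → β)) (x : Finset α) : ℕ :=
  (X.image (↑x : Set α).domRestrict).card

theorem eq_logb_restrictionCount (X : Finset (α → β)) (x : Finset α) :
    relRank X x = Real.logb 2 (restrictionCount X x) := by
  rw [restrictionCount, ← Set.ncard_coe_finset, Finset.coe_image]
  rfl

theorem restrictionCount_pos {X : Finset (α → β)} (hX : X.Nonempty) (x : Finset α) :
    0 < restrictionCount X x :=
  Finset.card_pos.mpr (hX.image _)

theorem add_lt_add_iff_restrictionCount_mul_lt {X : Finset (α → β)} (hX : X.Nonempty)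
    (a b c d : Finset α) :
    relRank X a + relRank X b < relRank X c + relRank X d ↔
      restrictionCount X a * restrictionCount X b <
        restrictionCount X c * restrictionCount X d := by
  have hpos (y : Finset α) : (0 : ℝ) < restrictionCount X y :=
    Nat.cast_pos.mpr (restrictionCount_pos hX y)
  simp only [eq_logb_restrictionCount]
  rw [← Real.logb_mul (hpos a).ne' (hpos b).ne', ← Real.logb_mul (hpos c).ne' (hpos d).ne',
    Real.logb_lt_logb_iff one_lt_two (mul_pos (hpos a) (hpos b)) (mul_pos (hpos c) (hpos d))]
  exact_mod_cast Iff.rfl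

end relRank

open relRank in
/-- Relational diversity rank functions can fail submodularity: for the three variables
`0, 1, 2` (playing the roles of `v₁, v₂, v₃`) there is a team `X` with
`rk_X({v₁,v₂,v₃}) + rk_X({v₂}) > rk_X({v₁,v₂}) + rk_X({v₂,v₃})`. -/
theorem relRank_not_submodular :
    ∃ X : Finset (Fin 3 → ℕ), X.Nonempty ∧
      relRank X ({0, 1, 2} : Finset (Fin 3)) + relRank X ({1} : Finset (Fin 3)) >
        relRank X ({0, 1} : Finset (Fin 3)) + relRank X ({1, 2} : Finset (Fin 3)) := by
  set X : Finset (Fin 3 → ℕ) := {![1, 1, 1], ![1, 1, 2], ![2, 1, 1], ![1, 2, 1], ![2, 1, 2]}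
  have hX : X.Nonempty := ⟨![1, 1, 1], by simp [X]⟩
  refine ⟨X, hX, (add_lt_add_iff_restrictionCount_mul_lt hX _ _ _ _).mpr ?_⟩
  have h012 : restrictionCount X {0, 1, 2} = 5 := by decide
  have h1 : restrictionCount X {1} = 2 := by decide
  have h01 : restrictionCount X {0, 1} = 3 := by decide
  have h12 : restrictionCount X {1, 2} = 3 := by decide
  rw [h012, h1, h01, h12]
  norm_num
end

section
/- Let M and A be sets, let X be a nonempty finite set of functions from M to A, and let rk_X be the relational diversity rank function induced by X. Then for all finite x, y ⊆ M: rk_X(x ∪ y) = rk_X(x) if and only if for all s, s' ∈ X, if s and s' agree on every element of x then they agree on every element of y (i.e., the dependence relation induced by rk_X coincides with database-theoretic functional dependence). -/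
open Set

-- `m = 0 ↔ n = 0` is needed because of the junk value `logb b 0 = 0 = logb b 1`.
theorem Real.logb_natCast_eq_logb_natCast_iff {b : ℝ} (hb : 1 < b) {m n : ℕ}
    (hmn : m = 0 ↔ n = 0) : logb b m = logb b n ↔ m = n := by
  refine ⟨fun h => ?_, fun h => h ▸ rfl⟩
  rcases Nat.eq_zero_or_pos m with hm | hm
  · rw [hm, hmn.mp hm]
  · have hn : 0 < n := Nat.pos_of_ne_zero fun hn => hm.ne' (hmn.mpr hn)
    exact_mod_cast Real.logb_injOn_pos hb (mem_Ioi.mpr (Nat.cast_pos.mpr hm))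
      (mem_Ioi.mpr (Nat.cast_pos.mpr hn)) h

namespace Set

variable {α β : Type*}

theorem domRestrict_image_eq_domRestrict₂_image {s t : Set α} (hst : s ⊆ t)
    (X : Set (α → β)) : s.domRestrict '' X = domRestrict₂ hst '' (t.domRestrict '' X) := by
  rw [image_image]
  rfl

theorem injOn_domRestrict₂_domRestrict_image_iff {s t : Set α} (hst : s ⊆ t)
    (X : Set (α → β)) :
    InjOn (domRestrict₂ hst) (t.domRestrict '' X) ↔
      ∀ f ∈ X, ∀ g ∈ X, EqOn f g s → EqOn f g t := by
  simp only [InjOn, forall_mem_image]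
  exact forall₄_congr fun f _ g _ => by
    rw [← domRestrict_eq_domRestrict_iff, ← domRestrict_eq_domRestrict_iff]
    rfl

theorem ncard_domRestrict_image_eq_zero_iff (s : Set α) {X : Set (α → β)} (hX : X.Finite) :
    (s.domRestrict '' X).ncard = 0 ↔ X = ∅ := by
  rw [ncard_eq_zero (hX.image _), image_eq_empty]

end Set

theorem relRank_eq_relRank_iff_s5 {α β : Type*} (X : Finset (α → β)) (x y : Finset α) :
    relRank X y = relRank X x ↔
      ((y : Set α).domRestrict '' (X : Set (α → β))).ncard =
        ((x : Set α).domRestrict '' (X : Set (α → β))).ncard := by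
  refine Real.logb_natCast_eq_logb_natCast_iff one_lt_two ?_
  exact (ncard_domRestrict_image_eq_zero_iff _ X.finite_toSet).trans
    (ncard_domRestrict_image_eq_zero_iff _ X.finite_toSet).symm

theorem relRank_dep_iff_functional_dependence_general {α : Type*} {β : Type*} [DecidableEq α]
    (X : Finset (α → β)) (x y : Finset α) :
    relRank X (x ∪ y) = relRank X x ↔
      ∀ s ∈ X, ∀ s' ∈ X, (∀ a ∈ x, s a = s' a) → ∀ a ∈ y, s a = s' a := by
  have hsub : (x : Set α) ⊆ ↑(x ∪ y) := Finset.coe_subset.mpr Finset.subset_union_left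
  rw [relRank_eq_relRank_iff_s5, domRestrict_image_eq_domRestrict₂_image hsub, eq_comm,
    ncard_image_iff (X.finite_toSet.image _), injOn_domRestrict₂_domRestrict_image_iff]
  simp only [Finset.coe_union, eqOn_union, Finset.mem_coe]
  exact forall₄_congr fun s _ s' _ => ⟨fun h hx => (h hx).2, fun h hx => ⟨hx, h hx⟩⟩

theorem relRank_dep_iff_functional_dependence {α : Type*} {β : Type*} [DecidableEq α]
    (X : Finset (α → β)) (hX : X.Nonempty) (x y : Finset α) :
    relRank X (x ∪ y) = relRank X x ↔
      ∀ s ∈ X, ∀ s' ∈ X, (∀ a ∈ x, s a = s' a) → ∀ a ∈ y, s a = s' a :=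
  relRank_dep_iff_functional_dependence_general X x y
end

section
/- Let M and A be sets, let X be a nonempty finite set of functions from M to A, and let rk_X be the relational diversity rank function induced by X. Then for all finite x, y ⊆ M: rk_X(x ∪ y) = rk_X(x) + rk_X(y) if and only if for all s, s' ∈ X there exists s'' ∈ X such that s'' agrees with s on every element of x and agrees with s' on every element of y. -/
/-!
A restriction to `x ∪ y` is the same as the pair of its restrictions to `x` and to `y`, so the
restrictions of `X` to `x ∪ y` embed into the product of its restrictions to `x` and to `y`.
Taking `log₂`, independence says that this embedding of finite sets is onto, and being onto is
exactly the amalgamation property.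
-/

open Set Function

theorem Real.logb_eq_logb_add_logb_iff {b x y z : ℝ} (hb : 1 < b) (hx : 0 < x) (hy : 0 < y)
    (hz : 0 < z) : logb b x = logb b y + logb b z ↔ x = y * z := by
  rw [← Real.logb_mul hy.ne' hz.ne']
  exact (Real.logb_injOn_pos hb).eq_iff hx (mul_pos hy hz)

namespace Set

variable {α β γ : Type*}

theorem image_prodMk_eq_prod_iff (S : Set γ) (f : γ → α) (g : γ → β) :
    (fun c => (f c, g c)) '' S = (f '' S) ×ˢ (g '' S) ↔
      ∀ c ∈ S, ∀ d ∈ S, ∃ e ∈ S, f e = f c ∧ g e = g d := by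
  rw [Subset.antisymm_iff, and_iff_right image_prodMk_subset_prod]
  constructor
  · intro h c hc d hd
    obtain ⟨e, he, hfg⟩ := h (mk_mem_prod (mem_image_of_mem f hc) (mem_image_of_mem g hd))
    exact ⟨e, he, Prod.ext_iff.mp hfg⟩
  · rintro h ⟨-, -⟩ ⟨⟨c, hc, rfl⟩, ⟨d, hd, rfl⟩⟩
    obtain ⟨e, he, hf, hg⟩ := h c hc d hd
    exact ⟨e, he, Prod.ext hf hg⟩

theorem ncard_image_prodMk_eq_mul_iff {S : Set γ} (hS : S.Finite) (f : γ → α) (g : γ → β) :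
    ((fun c => (f c, g c)) '' S).ncard = (f '' S).ncard * (g '' S).ncard ↔
      ∀ c ∈ S, ∀ d ∈ S, ∃ e ∈ S, f e = f c ∧ g e = g d := by
  rw [← image_prodMk_eq_prod_iff, ← ncard_prod]
  exact ⟨fun h => eq_of_subset_of_ncard_le image_prodMk_subset_prod h.ge
    ((hS.image f).prod (hS.image g)), congrArg ncard⟩

theorem domRestrict₂_union_injective {s t : Set α} :
    Injective fun g : ↥(s ∪ t) → β =>
      (domRestrict₂ (π := fun _ => β) subset_union_left g,
        domRestrict₂ (π := fun _ => β) subset_union_right g) := by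
  intro g g' h
  funext ⟨a, ha⟩
  rcases ha with ha | ha
  · exact congrFun (congrArg Prod.fst h) ⟨a, ha⟩
  · exact congrFun (congrArg Prod.snd h) ⟨a, ha⟩

theorem ncard_image_domRestrict_union (X : Set (α → β)) (s t : Set α) :
    ((s ∪ t).domRestrict '' X).ncard =
      ((fun f => (s.domRestrict f, t.domRestrict f)) '' X).ncard := by
  rw [← ncard_image_of_injective _ domRestrict₂_union_injective, image_image]
  rfl

end Set

theorem relRank_indep_iff_general {α : Type*} {β : Type*} [DecidableEq α]
    (X : Finset (α → β)) (x y : Finset α) :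
    relRank X (x ∪ y) = relRank X x + relRank X y ↔
      ∀ s ∈ X, ∀ s' ∈ X, ∃ s'' ∈ X,
        (∀ a ∈ x, s'' a = s a) ∧ (∀ a ∈ y, s'' a = s' a) := by
  -- For `X = ∅` every rank is the junk value `log₂ 0 = 0` and amalgamation holds vacuously.
  rcases X.eq_empty_or_nonempty with rfl | ⟨s₀, hs₀⟩
  · simp [relRank]
  have hpos : ∀ z : Set α, (0 : ℝ) < (z.domRestrict '' (X : Set (α → β))).ncard := fun z => by
    exact_mod_cast (ncard_pos (X.finite_toSet.image _)).mpr ⟨_, s₀, hs₀, rfl⟩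
  unfold relRank Set.restrict
  rw [Finset.coe_union, Real.logb_eq_logb_add_logb_iff one_lt_two (hpos _) (hpos _) (hpos _),
    ← Nat.cast_mul, Nat.cast_inj, ncard_image_domRestrict_union,
    ncard_image_prodMk_eq_mul_iff X.finite_toSet]
  simp only [Finset.mem_coe, domRestrict_eq_domRestrict_iff]
  rfl

theorem relRank_indep_iff {α : Type*} {β : Type*} [DecidableEq α]
    (X : Finset (α → β)) (hX : X.Nonempty) (x y : Finset α) :
    relRank X (x ∪ y) = relRank X x + relRank X y ↔
      ∀ s ∈ X, ∀ s' ∈ X, ∃ s'' ∈ X,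
        (∀ a ∈ x, s'' a = s a) ∧ (∀ a ∈ y, s'' a = s' a) :=
  relRank_indep_iff_general X x y
end

section
/- Let M be a set and rk a diversity rank function on M. The induced dependence relation =(x,y), defined by rk(x ∪ y) = rk(x), satisfies Armstrong's Axioms: (Reflexivity) =(x ∪ y, x); (Augmentation) if =(x,y) then =(x ∪ z, y ∪ z); (Transitivity) if =(x,y) and =(y,z) then =(x,z), for all finite x, y, z ⊆ M. -/
/-- `rk` is a diversity rank function: it maps finite sets to nonnegative reals and
satisfies axioms R1--R4. -/
def IsDivRank {α : Type*} [DecidableEq α] (rk : Finset α → ℝ) : Prop :=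
  (∀ x : Finset α, 0 ≤ rk x) ∧
  rk ∅ = 0 ∧
  (∀ x y : Finset α, rk x ≤ rk (x ∪ y) ∧ rk (x ∪ y) ≤ rk x + rk y) ∧
  (∀ x y z : Finset α, rk (x ∪ y) = rk x → rk (x ∪ y ∪ z) = rk (x ∪ z)) ∧
  (∀ x y z : Finset α, rk (x ∪ y ∪ z) = rk x + rk (y ∪ z) → rk (x ∪ y) = rk x + rk y)

/-- `y` depends on `x` (written `=(x,y)`) under `rk`. -/
def Dep {α : Type*} [DecidableEq α] (rk : Finset α → ℝ) (x y : Finset α) : Prop :=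
  rk (x ∪ y) = rk x

/-! Reflexivity is idempotence of union. By R3, once `=(x,y)` holds, adjoining `y` to any
superset `x ∪ z` of `x` leaves the rank unchanged; this is augmentation, and using it for both
`=(x,y)` and `=(y,z)` gives transitivity: `rk(x ∪ z) = rk(x ∪ y ∪ z) = rk(y ∪ x) = rk x`. -/

theorem dep_union_self_left {α : Type*} [DecidableEq α] (rk : Finset α → ℝ) (x y : Finset α) :
    Dep rk (x ∪ y) x := by
  rw [Dep, Finset.union_right_comm, Finset.union_self]

section R3

variable {α : Type*} [DecidableEq α] {rk : Finset α → ℝ}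
  (hR3 : ∀ x y z : Finset α, rk (x ∪ y) = rk x → rk (x ∪ y ∪ z) = rk (x ∪ z))
include hR3

theorem Dep.union_union {x y : Finset α} (hxy : Dep rk x y) (z : Finset α) :
    Dep rk (x ∪ z) (y ∪ z) := by
  rw [Dep, ← Finset.union_union_distrib_right, hR3 x y z hxy]

theorem Dep.trans {x y z : Finset α} (hxy : Dep rk x y) (hyz : Dep rk y z) : Dep rk x z := by
  calc rk (x ∪ z) = rk (x ∪ y ∪ z) := (hR3 x y z hxy).symm
    _ = rk (y ∪ z ∪ x) := by rw [Finset.union_comm (y ∪ z), Finset.union_assoc]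
    _ = rk (y ∪ x) := hR3 y z x hyz
    _ = rk x := by rw [Finset.union_comm]; exact hxy

end R3

theorem dep_armstrong_axioms {α : Type*} [DecidableEq α] (rk : Finset α → ℝ)
    (h : IsDivRank rk) :
    (∀ x y : Finset α, Dep rk (x ∪ y) x) ∧
    (∀ x y z : Finset α, Dep rk x y → Dep rk (x ∪ z) (y ∪ z)) ∧
    (∀ x y z : Finset α, Dep rk x y → Dep rk y z → Dep rk x z) := by
  obtain ⟨-, -, -, hR3, -⟩ := h
  exact ⟨dep_union_self_left rk, fun _ _ z hxy => hxy.union_union hR3 z,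
    fun _ _ _ hxy hyz => hxy.trans hR3 hyz⟩
end

section
/- (Semantic core of the completeness of the dependence axioms.) Let M be a set, let Σ be a set of pairs (z,w) of finite subsets of M (dependence assertions), and let x, y be finite subsets of M. If the dependence =(x,y) holds under every two-valued diversity rank function on M under which every assertion of Σ holds, then =(x,y) holds under every diversity rank function on M under which every assertion of Σ holds. Here a rank function rk satisfies the assertion (z,w) iff rk(z ∪ w) = rk(z). -/
open Classical in
/-- The two-valued diversity rank function determined by `W ⊆ M`:
`rk_W(x) = 1` if `x ∩ W ≠ ∅` and `rk_W(x) = 0` otherwise. -/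
noncomputable def twoValuedRank {α : Type*} (W : Set α) (x : Finset α) : ℝ :=
  if ∃ a ∈ x, a ∈ W then 1 else 0

/-- If `=(x,y)` holds under every two-valued diversity rank function satisfying all
(dependence) assertions of `Σ`, then it holds under every diversity rank function
satisfying all assertions of `Σ`. -/
theorem dep_completeness_two_valued {α : Type*} [DecidableEq α]
    (Sig : Set (Finset α × Finset α)) (x y : Finset α)
    (h : ∀ W : Set α,
      (∀ p ∈ Sig, twoValuedRank W (p.1 ∪ p.2) = twoValuedRank W p.1) →
      twoValuedRank W (x ∪ y) = twoValuedRank W x) :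
    ∀ rk : Finset α → ℝ, IsDivRank rk →
      (∀ p ∈ Sig, rk (p.1 ∪ p.2) = rk p.1) → rk (x ∪ y) = rk x := by
  intro rk hrk hSig
  obtain ⟨_, _, hR2, hR3, _⟩ := hrk
  -- monotonicity
  have mono : ∀ s t : Finset α, s ⊆ t → rk s ≤ rk t := by
    intro s t hst
    have := (hR2 s t).1
    rwa [Finset.union_eq_right.mpr hst] at this
  -- key lemma: if every element of s depends on x, then rk (x ∪ s) = rk x
  have key : ∀ s : Finset α, (∀ a ∈ s, rk (x ∪ {a}) = rk x) → rk (x ∪ s) = rk x := by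
    intro s
    induction s using Finset.induction_on with
    | empty => intro _; simp
    | insert _ _ ha ih =>
      rename_i a s
      intro hs
      have h1 : rk (x ∪ s) = rk x := ih fun b hb => hs b (Finset.mem_insert_of_mem hb)
      have h2 := hR3 x s {a} h1
      have h3 : rk (x ∪ {a}) = rk x := hs a (Finset.mem_insert_self a s)
      have : x ∪ insert a s = x ∪ s ∪ {a} := by
        ext b; simp [Finset.mem_insert, Finset.mem_union]
      rw [this, h2, h3]
  set W : Set α := {a | rk (x ∪ {a}) ≠ rk x} with hW
  have hSigW : ∀ p ∈ Sig, twoValuedRank W (p.1 ∪ p.2) = twoValuedRank W p.1 := by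
    intro p hp
    by_cases h1 : ∃ a ∈ p.1, a ∈ W
    · obtain ⟨a, ha, haW⟩ := h1
      have : ∃ a ∈ p.1 ∪ p.2, a ∈ W := ⟨a, Finset.mem_union_left _ ha, haW⟩
      simp only [twoValuedRank]
      rw [if_pos this, if_pos ⟨a, ha, haW⟩]
    · -- every element of p.1 depends on x
      push_neg at h1
      have hdep1 : ∀ a ∈ p.1, rk (x ∪ {a}) = rk x := by
        intro a ha
        have := h1 a ha
        simpa [hW] using this
      have hx1 : rk (x ∪ p.1) = rk x := key p.1 hdep1
      have h2 := hR3 p.1 p.2 x (hSig p hp)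
      have e1 : rk (x ∪ (p.1 ∪ p.2)) = rk x := by
        rw [Finset.union_comm x (p.1 ∪ p.2), h2, Finset.union_comm p.1 x, hx1]
      have hnone : ¬ ∃ a ∈ p.1 ∪ p.2, a ∈ W := by
        rintro ⟨a, ha, haW⟩
        apply haW
        have hle : rk (x ∪ {a}) ≤ rk (x ∪ (p.1 ∪ p.2)) := by
          apply mono
          exact Finset.union_subset_union_right (Finset.singleton_subset_iff.mpr ha)
        have hge : rk x ≤ rk (x ∪ {a}) := (hR2 x {a}).1
        show rk (x ∪ {a}) = rk x
        rw [e1] at hle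
        linarith
      simp only [twoValuedRank]
      rw [if_neg hnone, if_neg (by push_neg; exact h1)]
  have hxy := h W hSigW
  have hx0 : twoValuedRank W x = 0 := by
    have : ¬ ∃ a ∈ x, a ∈ W := by
      rintro ⟨a, ha, haW⟩
      exact haW (by simp [hW, Finset.union_eq_left.mpr (Finset.singleton_subset_iff.mpr ha)])
    simp [twoValuedRank, this]
  rw [hx0] at hxy
  have hnone : ¬ ∃ a ∈ x ∪ y, a ∈ W := by
    intro hex
    simp only [twoValuedRank] at hxy
    rw [if_pos hex] at hxy
    norm_num at hxy
  apply key
  intro a ha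
  by_contra hne
  exact hnone ⟨a, Finset.mem_union_right _ ha, hne⟩
end

section
/- (Semantic core of the completeness of the dependence axioms, relational version.) Let M be a set, let Σ be a set of pairs (z,w) of finite subsets of M (dependence assertions), and let x, y be finite subsets of M. If the dependence =(x,y) holds under every relational diversity rank function on M under which every assertion of Σ holds, then =(x,y) holds under every diversity rank function on M under which every assertion of Σ holds. Here a rank function rk satisfies the assertion (z,w) iff rk(z ∪ w) = rk(z). -/
/-- If `=(x,y)` holds under every relational diversity rank function satisfying all
(dependence) assertions of `Σ`, then it holds under every diversity rank function
satisfying all assertions of `Σ`. -/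
theorem dep_completeness_relational {α : Type*} [DecidableEq α]
    (Sig : Set (Finset α × Finset α)) (x y : Finset α)
    (h : ∀ (β : Type*) (X : Finset (α → β)), X.Nonempty →
      (∀ p ∈ Sig, relRank X (p.1 ∪ p.2) = relRank X p.1) →
      relRank X (x ∪ y) = relRank X x) :
    ∀ rk : Finset α → ℝ, IsDivRank rk →
      (∀ p ∈ Sig, rk (p.1 ∪ p.2) = rk p.1) → rk (x ∪ y) = rk x := by
  classical
  rintro rk ⟨hnn, h0, hmono, hR3, hR4⟩ hSig
  -- monotonicity
  have mono : ∀ w z : Finset α, w ⊆ z → rk w ≤ rk z := by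
    intro w z hwz
    have := (hmono w z).1
    rwa [Finset.union_eq_right.mpr hwz] at this
  -- closure lemma: a finite set of elements each dependent on x is dependent on x
  have key : ∀ z : Finset α, (∀ a ∈ z, rk (x ∪ {a}) = rk x) → rk (x ∪ z) = rk x := by
    intro z
    induction z using Finset.induction_on with
    | empty => intro _; simp
    | @insert a z ha ih =>
      intro hall
      have h1 : rk (x ∪ {a}) = rk x := hall a (Finset.mem_insert_self a z)
      have h2 : rk (x ∪ {a} ∪ z) = rk (x ∪ z) := hR3 x {a} z h1
      have h3 : rk (x ∪ z) = rk x := ih fun b hb => hall b (Finset.mem_insert_of_mem hb)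
      have he : x ∪ insert a z = x ∪ {a} ∪ z := by
        ext b; simp [Finset.mem_insert, Finset.mem_union]
      rw [he, h2, h3]
  -- the team
  let s0 : α → ULift Bool := fun _ => ULift.up false
  let s1 : α → ULift Bool := fun a => ULift.up (if rk (x ∪ {a}) = rk x then false else true)
  let X : Finset (α → ULift Bool) := {s0, s1}
  -- characterization of relRank X
  have rank_char : ∀ z : Finset α,
      relRank X z = if (∀ a ∈ z, rk (x ∪ {a}) = rk x) then 0 else 1 := by
    intro z
    have himg : ((↑z : Set α).restrict '' (↑X : Set (α → ULift Bool)))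
        = {(↑z : Set α).restrict s0, (↑z : Set α).restrict s1} := by
      simp only [X, Finset.coe_insert, Finset.coe_singleton, Set.image_insert_eq,
        Set.image_singleton]
    by_cases hz : ∀ a ∈ z, rk (x ∪ {a}) = rk x
    · have heq : (↑z : Set α).restrict s0 = (↑z : Set α).restrict s1 := by
        funext a
        have : rk (x ∪ {(a : α)}) = rk x := hz a a.2
        simpa [Set.restrict, s0, s1] using this
      rw [relRank, himg, heq, Set.pair_eq_singleton, Set.ncard_singleton, if_pos hz]
      simp
    · have hneq : (↑z : Set α).restrict s0 ≠ (↑z : Set α).restrict s1 := by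
        push_neg at hz
        obtain ⟨a, haz, hrk⟩ := hz
        intro hc
        have := congrFun hc ⟨a, haz⟩
        simp [Set.restrict, s0, s1, hrk] at this
        simp at hrk
        exact hrk this
      rw [relRank, himg, Set.ncard_pair hneq, if_neg hz]
      norm_num
  -- X satisfies Σ
  have hsat : ∀ p ∈ Sig, relRank X (p.1 ∪ p.2) = relRank X p.1 := by
    intro p hp
    rw [rank_char, rank_char]
    by_cases h1 : ∀ a ∈ p.1, rk (x ∪ {a}) = rk x
    · have h12 : ∀ a ∈ p.1 ∪ p.2, rk (x ∪ {a}) = rk x := by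
        intro a ha
        have hx1 : rk (x ∪ p.1) = rk x := key p.1 h1
        have hdep : rk (p.1 ∪ p.2) = rk p.1 := hSig p hp
        have h3 : rk (p.1 ∪ p.2 ∪ x) = rk (p.1 ∪ x) := hR3 p.1 p.2 x hdep
        have h4 : rk (x ∪ (p.1 ∪ p.2)) = rk x := by
          have e1 : x ∪ (p.1 ∪ p.2) = p.1 ∪ p.2 ∪ x := by
            ext b; simp [Finset.mem_union]; tauto
          have e2 : p.1 ∪ x = x ∪ p.1 := Finset.union_comm _ _
          rw [e1, h3, e2, hx1]
        have hle : rk (x ∪ {a}) ≤ rk x := by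
          calc rk (x ∪ {a}) ≤ rk (x ∪ (p.1 ∪ p.2)) := by
                apply mono
                intro b hb
                rcases Finset.mem_union.mp hb with hb | hb
                · exact Finset.mem_union_left _ hb
                · rw [Finset.mem_singleton] at hb; subst hb
                  exact Finset.mem_union_right _ ha
            _ = rk x := h4
        exact le_antisymm hle ((hmono x {a}).1)
      rw [if_pos h1, if_pos h12]
    · have h12 : ¬ (∀ a ∈ p.1 ∪ p.2, rk (x ∪ {a}) = rk x) := by
        intro hc
        exact h1 fun a ha => hc a (Finset.mem_union_left _ ha)
      rw [if_neg h1, if_neg h12]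
  -- apply the hypothesis
  have hXne : X.Nonempty := ⟨s0, by simp [X]⟩
  have hmain := h (ULift Bool) X hXne hsat
  rw [rank_char, rank_char] at hmain
  have hx : ∀ a ∈ x, rk (x ∪ {a}) = rk x := by
    intro a ha
    congr 1
    simp [Finset.union_eq_left.mpr (Finset.singleton_subset_iff.mpr ha)]
  have hxy : ∀ a ∈ x ∪ y, rk (x ∪ {a}) = rk x := by
    by_contra hc
    rw [if_neg hc, if_pos hx] at hmain
    norm_num at hmain
  have hfin := key (x ∪ y) hxy
  have e : x ∪ (x ∪ y) = x ∪ y := by rw [← Finset.union_assoc, Finset.union_self]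
  rwa [e] at hfin
end

section
/- Let M be a set and rk a diversity rank function on M. The induced independence relation x ⊥ y, defined by rk(x ∪ y) = rk(x) + rk(y), satisfies: (Empty Set) x ⊥ ∅; (Symmetry) if x ⊥ y then y ⊥ x; (Decomposition) if x ⊥ (y ∪ z) then x ⊥ y; (Mixing) if x ⊥ y and (x ∪ y) ⊥ z then x ⊥ (y ∪ z); (Constancy) if z ⊥ z then z ⊥ x, for all finite x, y, z ⊆ M. -/
/-- `x` and `y` are independent (written `x ⊥ y`) under `rk`. -/
def Indep {α : Type*} [DecidableEq α] (rk : Finset α → ℝ) (x y : Finset α) : Prop :=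
  rk (x ∪ y) = rk x + rk y

namespace Indep

variable {α : Type*} [DecidableEq α] {rk : Finset α → ℝ}

theorem empty_right (h_empty : rk ∅ = 0) (x : Finset α) : Indep rk x ∅ := by
  simp [Indep, h_empty]

theorem symm {x y : Finset α} (hxy : Indep rk x y) : Indep rk y x := by
  rw [Indep, Finset.union_comm, hxy, add_comm]

theorem of_union_right
    (h_R4 : ∀ x y z : Finset α, rk (x ∪ y ∪ z) = rk x + rk (y ∪ z) → rk (x ∪ y) = rk x + rk y)
    {x y z : Finset α} (h : Indep rk x (y ∪ z)) : Indep rk x y :=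
  h_R4 x y z (by rwa [Finset.union_assoc])

/-- By subadditivity, `rk x + rk y + rk z = rk (x ∪ y ∪ z) ≤ rk x + rk (y ∪ z) ≤ rk x + rk y + rk z`. -/
theorem union_right (h_subadd : ∀ x y : Finset α, rk (x ∪ y) ≤ rk x + rk y)
    {x y z : Finset α} (hxy : Indep rk x y) (hxyz : Indep rk (x ∪ y) z) :
    Indep rk x (y ∪ z) := by
  have h_sum : rk (x ∪ (y ∪ z)) = rk x + rk y + rk z := by
    rw [← Finset.union_assoc, hxyz, hxy]
  have := h_subadd x (y ∪ z)
  have := h_subadd y z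
  rw [Indep]
  linarith

theorem of_self (h_mono : ∀ x y : Finset α, rk x ≤ rk (x ∪ y))
    (h_subadd : ∀ x y : Finset α, rk (x ∪ y) ≤ rk x + rk y)
    {z : Finset α} (hz : Indep rk z z) (x : Finset α) : Indep rk z x := by
  have hz_zero : rk z = 0 := by
    rw [Indep, Finset.union_self] at hz
    linarith
  have h_lower : rk x ≤ rk (z ∪ x) := Finset.union_comm z x ▸ h_mono x z
  have := h_subadd z x
  rw [Indep]
  linarith

end Indep

theorem indep_axioms {α : Type*} [DecidableEq α] (rk : Finset α → ℝ)
    (h : IsDivRank rk) :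
    (∀ x : Finset α, Indep rk x ∅) ∧
    (∀ x y : Finset α, Indep rk x y → Indep rk y x) ∧
    (∀ x y z : Finset α, Indep rk x (y ∪ z) → Indep rk x y) ∧
    (∀ x y z : Finset α, Indep rk x y → Indep rk (x ∪ y) z → Indep rk x (y ∪ z)) ∧
    (∀ x z : Finset α, Indep rk z z → Indep rk z x) := by
  obtain ⟨-, h_empty, h_R2, -, h_R4⟩ := h
  have h_mono : ∀ x y : Finset α, rk x ≤ rk (x ∪ y) := fun x y => (h_R2 x y).1
  have h_subadd : ∀ x y : Finset α, rk (x ∪ y) ≤ rk x + rk y := fun x y => (h_R2 x y).2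
  exact ⟨Indep.empty_right h_empty, fun _ _ => Indep.symm,
    fun _ _ _ => Indep.of_union_right h_R4, fun _ _ _ => Indep.union_right h_subadd,
    fun x _ hz => Indep.of_self h_mono h_subadd hz x⟩
end

section
/- (Constancy Augmentation, semantic form.) Let M be a set, rk a diversity rank function on M, and u, x, y finite subsets of M. If u ⊥ u and x ⊥ y hold under rk, then (x ∪ u) ⊥ y holds under rk, i.e., if rk(u) + rk(u) = rk(u) and rk(x ∪ y) = rk(x) + rk(y), then rk(x ∪ u ∪ y) = rk(x ∪ u) + rk(y). -/
namespace IsDivRank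

variable {α : Type*} [DecidableEq α] {rk : Finset α → ℝ}

theorem rk_union_of_rk_eq_zero (h : IsDivRank rk) (x : Finset α) {u : Finset α}
    (hu : rk u = 0) : rk (x ∪ u) = rk x :=
  le_antisymm (by linarith [(h.2.2.1 x u).2]) (h.2.2.1 x u).1

theorem rk_union_union_of_rk_eq_zero (h : IsDivRank rk) (x : Finset α) {u : Finset α}
    (hu : rk u = 0) (y : Finset α) : rk (x ∪ u ∪ y) = rk (x ∪ y) :=
  h.2.2.2.1 x u y (h.rk_union_of_rk_eq_zero x hu)

end IsDivRank

/-- Constancy Augmentation: if `u ⊥ u` and `x ⊥ y` then `(x ∪ u) ⊥ y`. -/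
theorem constancy_augmentation {α : Type*} [DecidableEq α] (rk : Finset α → ℝ)
    (h : IsDivRank rk) (u x y : Finset α)
    (huu : rk u + rk u = rk u)
    (hxy : rk (x ∪ y) = rk x + rk y) :
    rk (x ∪ u ∪ y) = rk (x ∪ u) + rk y := by
  have hu : rk u = 0 := by linarith
  rw [h.rk_union_union_of_rk_eq_zero x hu, hxy, h.rk_union_of_rk_eq_zero x hu]
end

section
/- (Semantic core of completeness of the independence axioms with respect to constancy assertions.) Let M be a set, let Σ be a set of pairs (z,w) of finite subsets of M (independence assertions), and let a ∈ M. If the independence {a} ⊥ {a} holds under every relational diversity rank function on M under which every assertion of Σ holds, then {a} ⊥ {a} holds under every diversity rank function on M under which every assertion of Σ holds. Here a rank function rk satisfies the assertion (z,w) iff rk(z ∪ w) = rk(z) + rk(w). -/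
section Aux

open scoped Classical

universe v

variable {α : Type*} [DecidableEq α]

/-- The two-element team `{const false, indicator of a}` (with values lifted to an
arbitrary universe). -/
noncomputable def pairTeam (a : α) : Finset (α → ULift.{v} Bool) :=
  {fun _ => ⟨false⟩, fun m => ⟨decide (m = a)⟩}

/-- The rank of the two-element team `{const false, indicator of a}`. -/
lemma relRank_pair_team (a : α) (x : Finset α) :
    relRank (pairTeam.{v} a) x = if a ∈ x then 1 else 0 := by
  have hX : (↑(pairTeam.{v} a) : Set (α → ULift.{v} Bool))
      = {fun _ => ⟨false⟩, fun m => ⟨decide (m = a)⟩} := by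
    simp [pairTeam]
  unfold relRank
  rw [hX, Set.image_pair]
  by_cases hax : a ∈ x
  · have hne : (↑x : Set α).restrict (fun _ => (⟨false⟩ : ULift.{v} Bool))
        ≠ (↑x : Set α).restrict (fun m => (⟨decide (m = a)⟩ : ULift.{v} Bool)) := by
      intro hEq
      have := congrFun hEq ⟨a, by exact_mod_cast hax⟩
      simp [Set.restrict_apply, Set.restrict] at this
    rw [Set.ncard_pair hne]
    simp [hax]
  · have hEq : (↑x : Set α).restrict (fun _ => (⟨false⟩ : ULift.{v} Bool))
        = (↑x : Set α).restrict (fun m => (⟨decide (m = a)⟩ : ULift.{v} Bool)) := by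
      funext m
      have hm : (m : α) ∈ x := by exact_mod_cast m.2
      have : (m : α) ≠ a := fun hma => hax (hma ▸ hm)
      simp [Set.restrict_apply, Set.restrict, this]
    rw [hEq, Set.pair_eq_singleton, Set.ncard_singleton]
    simp [hax]

lemma pairTeam_nonempty (a : α) : (pairTeam a).Nonempty :=
  ⟨fun _ => ⟨false⟩, by simp [pairTeam]⟩

end Aux

/-- If the constancy assertion `{a} ⊥ {a}` holds under every relational diversity rank
function satisfying all independence assertions of `Σ`, then it holds under every
diversity rank function satisfying all assertions of `Σ`. -/
theorem indep_constancy_completeness {α : Type*} [DecidableEq α]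
    (Sig : Set (Finset α × Finset α)) (a : α)
    (h : ∀ (β : Type*) (X : Finset (α → β)), X.Nonempty →
      (∀ p ∈ Sig, relRank X (p.1 ∪ p.2) = relRank X p.1 + relRank X p.2) →
      relRank X ({a} ∪ {a}) = relRank X {a} + relRank X {a}) :
    ∀ rk : Finset α → ℝ, IsDivRank rk →
      (∀ p ∈ Sig, rk (p.1 ∪ p.2) = rk p.1 + rk p.2) →
      rk ({a} ∪ {a}) = rk {a} + rk {a} := by
  classical
  intro rk hrk hsig
  obtain ⟨hnn, h0, hmono, hR3, hR4⟩ := hrk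
  -- Step 1: there is an assertion (z, w) ∈ Σ with a ∈ z and a ∈ w.
  by_cases hex : ∃ p ∈ Sig, a ∈ p.1 ∧ a ∈ p.2
  · obtain ⟨⟨z, w⟩, hpS, haz, haw⟩ := hex
    have hzw := hsig _ hpS
    simp only at hzw
    have hza : z ∪ {a} = z :=
      Finset.union_eq_left.mpr (Finset.singleton_subset_iff.mpr haz)
    have haww : ({a} : Finset α) ∪ w = w :=
      Finset.union_eq_right.mpr (Finset.singleton_subset_iff.mpr haw)
    have key : rk (z ∪ {a} ∪ w) = rk z + rk ({a} ∪ w) := by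
      rw [hza, haww]; exact hzw
    have h2 := hR4 z {a} w key
    rw [hza] at h2
    have ha0 : rk {a} = 0 := by linarith
    rw [Finset.union_self, ha0]
    norm_num
  · -- Otherwise the two-element team satisfies Σ but makes `a` non-constant: contradiction.
    exfalso
    push_neg at hex
    refine absurd (h (ULift Bool) (pairTeam a) (pairTeam_nonempty a) ?_) ?_
    · intro p hp
      have hna := hex p hp
      rw [relRank_pair_team, relRank_pair_team, relRank_pair_team]
      by_cases h1 : a ∈ p.1 <;> by_cases h2 : a ∈ p.2 <;>
        simp [Finset.mem_union, h1, h2] at hna ⊢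
    · rw [relRank_pair_team, relRank_pair_team]
      simp
end

section
/- (Representation theorem for dependence.) Let M be a countable set and let Σ be a set of pairs (x,y) of finite subsets of M that is closed under Armstrong's Axioms, i.e.: (Reflexivity) (x ∪ y, x) ∈ Σ for all finite x, y ⊆ M; (Augmentation) if (x,y) ∈ Σ then (x ∪ z, y ∪ z) ∈ Σ for all finite z ⊆ M; (Transitivity) if (x,y) ∈ Σ and (y,z) ∈ Σ then (x,z) ∈ Σ. Then there exists a diversity rank function rk on M such that for all finite x, y ⊆ M, (x,y) ∈ Σ if and only if rk(x ∪ y) = rk(x). -/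
open Finset

section Squash

noncomputable def squash (t : ℝ) : ℝ := if t = 0 then 0 else (3 + t) / 4

lemma squash_zero : squash 0 = 0 := if_pos rfl

lemma squash_of_ne_zero {t : ℝ} (ht : t ≠ 0) : squash t = (3 + t) / 4 := if_neg ht

lemma squash_strictMonoOn : StrictMonoOn squash (Set.Ici 0) := by
  intro s (hs : 0 ≤ s) t (ht : 0 ≤ t) hst
  have ht0 : t ≠ 0 := by linarith
  rw [squash_of_ne_zero ht0]
  rcases hs.eq_or_lt with rfl | hs
  · rw [squash_zero]; linarith
  · rw [squash_of_ne_zero hs.ne']; linarith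

lemma squash_nonneg {t : ℝ} (ht : 0 ≤ t) : 0 ≤ squash t := by
  simpa [squash_zero] using squash_strictMonoOn.monotoneOn (Set.mem_Ici.2 le_rfl) ht ht

lemma squash_le_one {t : ℝ} (ht : t ≤ 1) : squash t ≤ 1 := by
  unfold squash; split_ifs <;> linarith

lemma three_quarters_le_squash {t : ℝ} (h0 : 0 ≤ t) (ht : t ≠ 0) : 3 / 4 ≤ squash t := by
  rw [squash_of_ne_zero ht]; linarith

variable {α : Type*} [DecidableEq α] {s : Finset α → ℝ}

theorem isDivRank_squash_comp (hempty : s ∅ = 0) (hle : ∀ x, s x ≤ 1)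
    (hmono : ∀ x y, s x ≤ s (x ∪ y))
    (hR3 : ∀ x y z, s (x ∪ y) = s x → s (x ∪ y ∪ z) = s (x ∪ z)) :
    IsDivRank (fun x => squash (s x)) := by
  have hnonneg (x : Finset α) : 0 ≤ s x := by simpa [hempty] using hmono ∅ x
  have hinj {x y : Finset α} : squash (s x) = squash (s y) ↔ s x = s y :=
    squash_strictMonoOn.injOn.eq_iff (hnonneg x) (hnonneg y)
  have habsorb {x : Finset α} (hx : s x = 0) (y : Finset α) : s (x ∪ y) = s y := by
    simpa using hR3 ∅ x y (by simpa [hempty] using hx)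
  have hmono' (x y : Finset α) : squash (s x) ≤ squash (s (x ∪ y)) :=
    squash_strictMonoOn.monotoneOn (hnonneg _) (hnonneg _) (hmono x y)
  have hbig {x : Finset α} (hx : s x ≠ 0) : 3 / 4 ≤ squash (s x) :=
    three_quarters_le_squash (hnonneg x) hx
  refine ⟨fun x => squash_nonneg (hnonneg x), by simp [hempty, squash_zero],
    fun x y => ⟨hmono' x y, ?_⟩, fun x y z h => hinj.2 (hR3 x y z (hinj.1 h)), ?_⟩
  · by_cases hx : s x = 0
    · simp [habsorb hx, hx, squash_zero]
    by_cases hy : s y = 0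
    · simp [union_comm x, habsorb hy, hy, squash_zero]
    linarith [hbig hx, hbig hy, squash_le_one (hle (x ∪ y))]
  · intro x y z h
    by_cases hx : s x = 0
    · simp [habsorb hx, hx, squash_zero]
    by_cases hyz : s (y ∪ z) = 0
    · have hy : s y = 0 := le_antisymm (hyz ▸ hmono y z) (hnonneg y)
      simp [union_comm x, habsorb hy, hy, squash_zero]
    linarith [hbig hx, hbig hyz, squash_le_one (hle (x ∪ y ∪ z))]

end Squash

section Weight

variable {α : Type*} (w : α → ℝ)

noncomputable def setWeight (A : Set α) : ℝ := ∑' a, A.indicator w a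

variable {w}

lemma setWeight_nonneg (hw : ∀ a, 0 ≤ w a) (A : Set α) : 0 ≤ setWeight w A :=
  tsum_nonneg fun a => Set.indicator_nonneg (fun b _ => hw b) a

variable (hws : Summable w)
include hws

lemma setWeight_mono (hw : ∀ a, 0 ≤ w a) {A B : Set α} (h : A ⊆ B) :
    setWeight w A ≤ setWeight w B :=
  (hws.indicator A).tsum_le_tsum
    (fun _ => Set.indicator_le_indicator_of_subset h (fun a => hw a) _) (hws.indicator B)

lemma setWeight_le_tsum (hw : ∀ a, 0 ≤ w a) (A : Set α) : setWeight w A ≤ ∑' a, w a := by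
  simpa [setWeight] using setWeight_mono hws hw (Set.subset_univ A)

lemma setWeight_eq_iff_of_subset (hw : ∀ a, 0 < w a) {A B : Set α} (h : A ⊆ B) :
    setWeight w A = setWeight w B ↔ A = B := by
  refine ⟨fun hAB => ?_, fun hAB => hAB ▸ rfl⟩
  by_contra hne
  obtain ⟨a, haB, haA⟩ := Set.exists_of_ssubset (h.ssubset_of_ne hne)
  refine ((hws.indicator A).tsum_lt_tsum (i := a)
    (fun _ => Set.indicator_le_indicator_of_subset h (fun a => (hw a).le) _) ?_
    (hws.indicator B)).ne hAB
  simpa [haA, haB] using hw a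

end Weight

lemma exists_pos_summable_tsum_lt_one (α : Type*) [Countable α] :
    ∃ w : α → ℝ, (∀ a, 0 < w a) ∧ Summable w ∧ ∑' a, w a < 1 := by
  obtain ⟨w, hw, c, hc, hc1⟩ := NNReal.exists_pos_sum_of_countable one_ne_zero α
  have hc' : HasSum (fun a => (w a : ℝ)) c := NNReal.hasSum_coe.2 hc
  exact ⟨fun a => w a, fun a => hw a, hc'.summable, by rw [hc'.tsum_eq]; exact_mod_cast hc1⟩

section Armstrong

variable {α : Type*} [DecidableEq α]

structure ArmstrongClosed (Sig : Set (Finset α × Finset α)) : Prop where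
  refl : ∀ x y : Finset α, (x ∪ y, x) ∈ Sig
  aug : ∀ x y z : Finset α, (x, y) ∈ Sig → (x ∪ z, y ∪ z) ∈ Sig
  trans : ∀ x y z : Finset α, (x, y) ∈ Sig → (y, z) ∈ Sig → (x, z) ∈ Sig

def depClosure (Sig : Set (Finset α × Finset α)) (x : Finset α) : Set α :=
  {a | (x, {a}) ∈ Sig}

namespace ArmstrongClosed

variable {Sig : Set (Finset α × Finset α)} (hSig : ArmstrongClosed Sig) {x x' y z : Finset α}
include hSig

lemma mem_of_subset (h : y ⊆ x) : (x, y) ∈ Sig := by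
  simpa [union_eq_right.2 h] using hSig.refl y x

lemma mem_of_subset_left (hx : x ⊆ x') (h : (x, y) ∈ Sig) : (x', y) ∈ Sig :=
  hSig.trans _ _ _ (hSig.mem_of_subset hx) h

lemma union_mem (hy : (x, y) ∈ Sig) (hz : (x, z) ∈ Sig) : (x, y ∪ z) ∈ Sig := by
  have hxy : (x, x ∪ y) ∈ Sig := by simpa [union_comm y x] using hSig.aug x y x hy
  have hxyz : (x ∪ y, y ∪ z) ∈ Sig := by simpa [union_comm z y] using hSig.aug x z y hz
  exact hSig.trans _ _ _ hxy hxyz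

lemma mem_iff_subset_depClosure : (x, y) ∈ Sig ↔ (y : Set α) ⊆ depClosure Sig x := by
  refine ⟨fun h a ha => hSig.trans _ _ _ h (hSig.mem_of_subset (by simpa using ha)),
    fun h => ?_⟩
  induction y using Finset.induction_on with
  | empty => exact hSig.mem_of_subset (empty_subset x)
  | insert a y _ ih =>
    rw [insert_eq]
    exact hSig.union_mem (h (by simp)) (ih fun b hb => h (by simp [hb]))

lemma depClosure_mono (h : x ⊆ x') : depClosure Sig x ⊆ depClosure Sig x' :=
  fun _ ha => hSig.mem_of_subset_left h ha

lemma mem_iff_depClosure_union_eq :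
    (x, y) ∈ Sig ↔ depClosure Sig (x ∪ y) = depClosure Sig x := by
  refine ⟨fun h => ?_, fun h => ?_⟩
  · refine (Set.Subset.antisymm ?_ (hSig.depClosure_mono subset_union_left))
    intro a ha
    exact hSig.trans _ _ _ (hSig.union_mem (hSig.mem_of_subset subset_rfl) h) ha
  · rw [hSig.mem_iff_subset_depClosure, ← h, ← hSig.mem_iff_subset_depClosure]
    exact hSig.mem_of_subset subset_union_right

end ArmstrongClosed

end Armstrong

section ClosureWeight

variable {α : Type*} {Sig : Set (Finset α × Finset α)} {w : α → ℝ}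

noncomputable def closureWeight (Sig : Set (Finset α × Finset α)) (w : α → ℝ)
    (x : Finset α) : ℝ :=
  setWeight w (depClosure Sig x) - setWeight w (depClosure Sig ∅)

lemma closureWeight_le_tsum (hw : ∀ a, 0 < w a) (hws : Summable w) (x : Finset α) :
    closureWeight Sig w x ≤ ∑' a, w a := by
  rw [closureWeight]
  linarith [setWeight_le_tsum hws (fun a => (hw a).le) (depClosure Sig x),
    setWeight_nonneg (fun a => (hw a).le) (depClosure Sig ∅)]

variable [DecidableEq α] (hSig : ArmstrongClosed Sig) (hw : ∀ a, 0 < w a) (hws : Summable w)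
include hSig hw hws

lemma closureWeight_le_union (x y : Finset α) :
    closureWeight Sig w x ≤ closureWeight Sig w (x ∪ y) :=
  sub_le_sub_right
    (setWeight_mono hws (fun a => (hw a).le) (hSig.depClosure_mono subset_union_left)) _

lemma closureWeight_nonneg (x : Finset α) : 0 ≤ closureWeight Sig w x := by
  simpa [closureWeight] using closureWeight_le_union hSig hw hws ∅ x

lemma mem_iff_closureWeight_union_eq {x y : Finset α} :
    (x, y) ∈ Sig ↔ closureWeight Sig w (x ∪ y) = closureWeight Sig w x := by
  rw [hSig.mem_iff_depClosure_union_eq, closureWeight, closureWeight, sub_left_inj, eq_comm,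
    eq_comm (a := setWeight w _),
    setWeight_eq_iff_of_subset hws hw (hSig.depClosure_mono subset_union_left)]

theorem isDivRank_squash_closureWeight (hw1 : ∑' a, w a ≤ 1) :
    IsDivRank fun x => squash (closureWeight Sig w x) := by
  refine isDivRank_squash_comp (sub_self _) (fun x => (closureWeight_le_tsum hw hws x).trans hw1)
    (closureWeight_le_union hSig hw hws) fun x y z h => ?_
  rw [← mem_iff_closureWeight_union_eq hSig hw hws] at h
  rw [union_right_comm, ← mem_iff_closureWeight_union_eq hSig hw hws]
  exact hSig.mem_of_subset_left subset_union_left h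

end ClosureWeight

/-- Representation theorem: every set of dependence assertions over a countable set
that is closed under Armstrong's Axioms arises from some diversity rank function. -/
theorem dep_representation {α : Type*} [Countable α] [DecidableEq α]
    (Sig : Set (Finset α × Finset α))
    (hrefl : ∀ x y : Finset α, (x ∪ y, x) ∈ Sig)
    (haug : ∀ x y z : Finset α, (x, y) ∈ Sig → (x ∪ z, y ∪ z) ∈ Sig)
    (htrans : ∀ x y z : Finset α, (x, y) ∈ Sig → (y, z) ∈ Sig → (x, z) ∈ Sig) :
    ∃ rk : Finset α → ℝ, IsDivRank rk ∧
      ∀ x y : Finset α, (x, y) ∈ Sig ↔ rk (x ∪ y) = rk x := by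
  have hSig : ArmstrongClosed Sig := ⟨hrefl, haug, htrans⟩
  obtain ⟨w, hw, hws, hw1⟩ := exists_pos_summable_tsum_lt_one α
  refine ⟨fun x => squash (closureWeight Sig w x),
    isDivRank_squash_closureWeight hSig hw hws hw1.le, fun x y => ?_⟩
  rw [mem_iff_closureWeight_union_eq hSig hw hws]
  exact (squash_strictMonoOn.injOn.eq_iff (closureWeight_nonneg hSig hw hws _)
    (closureWeight_nonneg hSig hw hws _)).symm
end
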